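/- The relation ≤_{J,δ} is a partial order on W^J: it is reflexive, transitive, and antisymmetric (i.e., if w ≤_{J,δ} w' and w' ≤_{J,δ} w for w, w' ∈ W^J, then w = w'). -/

import Mathlib

namespace HePaper

variable {I : Type*} {M : CoxeterMatrix I} {W : Type*} [Group W]

/-- The standard parabolic subgroup `W_J` generated by the simple reflections `s_j`, `j ∈ J`. -/
def parabolic (cs : CoxeterSystem M W) (J : Set I) : Subgroup W :=
  Subgroup.closure (cs.simple '' J)

/-- `W^J`, the set of minimal length coset representatives for `W/W_J`. -/
def minRight (cs : CoxeterSystem M W) (J : Set I) : Set W :=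
  {w : W | ∀ j ∈ J, cs.length w < cs.length (w * cs.simple j)}

/-- `^J W`, the set of minimal length coset representatives for `W_J\W`. -/
def minLeft (cs : CoxeterSystem M W) (J : Set I) : Set W :=
  {w : W | ∀ j ∈ J, cs.length w < cs.length (cs.simple j * w)}

/-- `Ad(u)(K) = {k ∈ I : s_k = u s_j u⁻¹ for some j ∈ K}`. -/
def AdSet (cs : CoxeterSystem M W) (u : W) (K : Set I) : Set I :=
  {k : I | ∃ j ∈ K, cs.simple k = u * cs.simple j * u⁻¹}

/-- Membership in the set `T(J, δ)` of sequences `(J_n, w_n)_{n ≥ 0}`. -/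
def InT (cs : CoxeterSystem M W) (J : Set I) (δ : I ≃ I)
    (Jseq : ℕ → Set I) (wseq : ℕ → W) : Prop :=
  Jseq 0 = J ∧
  (∀ n : ℕ, Jseq (n + 1) = Jseq n ∩ AdSet cs (wseq n) (δ '' Jseq n)) ∧
  (∀ n : ℕ, wseq n ∈ minLeft cs (Jseq n) ∩ minRight cs (δ '' Jseq n)) ∧
  (∀ n : ℕ, ∃ x ∈ parabolic cs (Jseq (n + 1)), ∃ y ∈ parabolic cs (δ '' Jseq n),
      wseq (n + 1) = x * wseq n * y)

/-- `I(J, δ; w)`: the largest subset `K ⊆ J` with `Ad(w)(K) = δ(K)`. -/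
def IJdw (cs : CoxeterSystem M W) (J : Set I) (δ : I ≃ I) (w : W) : Set I :=
  ⋃₀ {K : Set I | K ⊆ J ∧ AdSet cs w K = δ '' K}

/-- The orbit of `w` under the `W_J`-action `x · y = δ(x) y x⁻¹`. -/
def orbit (cs : CoxeterSystem M W) (J : Set I) (δW : W ≃* W) (w : W) : Set W :=
  {y : W | ∃ x ∈ parabolic cs J, y = δW x * w * x⁻¹}

/-- The set of elements of minimal length in the orbit of `w`. -/
def orbitMin (cs : CoxeterSystem M W) (J : Set I) (δW : W ≃* W) (w : W) : Set W :=
  {v ∈ orbit cs J δW w | ∀ u ∈ orbit cs J δW w, cs.length v ≤ cs.length u}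

/-- `w →_{s_j} w'` for some `j ∈ J`: `w' = s_{δ(j)} w s_j` and `ℓ(w') ≤ ℓ(w)`. -/
def stepTo (cs : CoxeterSystem M W) (J : Set I) (δ : I ≃ I) (w w' : W) : Prop :=
  ∃ j ∈ J, w' = cs.simple (δ j) * w * cs.simple j ∧ cs.length w' ≤ cs.length w

/-- `w →_{J,δ} w'`. -/
def toRel (cs : CoxeterSystem M W) (J : Set I) (δ : I ≃ I) : W → W → Prop :=
  Relation.ReflTransGen (stepTo cs J δ)

/-- `w` and `w'` are elementarily strongly `(J, δ)`-conjugate. -/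
def ElemStrong (cs : CoxeterSystem M W) (J : Set I) (δW : W ≃* W) (w w' : W) : Prop :=
  cs.length w = cs.length w' ∧
  ∃ x ∈ parabolic cs J, w' = δW x * w * x⁻¹ ∧
    (cs.length (δW x * w) = cs.length x + cs.length w ∨
     cs.length (w * x⁻¹) = cs.length x + cs.length w)

/-- `w ∼_{J,δ} w'`: strongly `(J, δ)`-conjugate. -/
def simRel (cs : CoxeterSystem M W) (J : Set I) (δW : W ≃* W) : W → W → Prop :=
  Relation.ReflTransGen (ElemStrong cs J δW)

/-- The Bruhat order on `W`: some reduced word for `w` contains a subword that is a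
reduced word for `u`. -/
def bruhatLE (cs : CoxeterSystem M W) (u w : W) : Prop :=
  ∃ ω : List I, cs.wordProd ω = w ∧ cs.IsReduced ω ∧
    ∃ ω' : List I, ω'.Sublist ω ∧ cs.wordProd ω' = u ∧ cs.IsReduced ω'

/-- `supp(w)`: the smallest subset `K ⊆ I` with `w ∈ W_K`. -/
def supp (cs : CoxeterSystem M W) (w : W) : Set I :=
  ⋂₀ {K : Set I | w ∈ parabolic cs K}

/-- `supp_δ(w)`: the smallest `δ`-stable subset of `I` containing `supp(w)`. -/
def suppDelta (cs : CoxeterSystem M W) (δ : I ≃ I) (w : W) : Set I :=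
  ⋃ n : ℕ, (⇑δ)^[n] '' supp cs w

/-- `w ≤_{J,δ} w'` for `w, w' ∈ W^J`. -/
def leJd (cs : CoxeterSystem M W) (J : Set I) (δW : W ≃* W) (w w' : W) : Prop :=
  ∀ v' ∈ orbitMin cs J δW w', ∃ v ∈ orbitMin cs J δW w, bruhatLE cs v v'



/-! ### Auxiliary development: the reflection cocycle and the strong exchange property -/

section BruhatDevelopment

open List

lemma zmod2_add_self (x : ZMod 2) : x + x = 0 := CharTwo.add_self_eq_zero x

lemma sum_range_add' {A : Type*} [AddCommMonoid A] (g : ℕ → A) (a b : ℕ) :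
    ∑ j ∈ Finset.range (a + b), g j
      = ∑ j ∈ Finset.range a, g j + ∑ j ∈ Finset.range b, g (a + j) := by
  induction b with
  | zero => simp
  | succ b ih => rw [← Nat.add_assoc, Finset.sum_range_succ, ih, Finset.sum_range_succ, add_assoc]

lemma conj_eq_iff (g t x : W) : g * t * g⁻¹ = x ↔ t = g⁻¹ * x * g := by
  constructor <;> intro h <;> subst h <;> group

open Classical in
/-- The reflection-cocycle map. -/
noncomputable def phi (cs : CoxeterSystem M W) (i : I) : W × ZMod 2 → W × ZMod 2 :=
  fun p => (cs.simple i * p.1 * cs.simple i, p.2 + if p.1 = cs.simple i then 1 else 0)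

lemma simple_conj_eq_simple_iff (cs : CoxeterSystem M W) (i : I) (t : W) :
    cs.simple i * t * cs.simple i = cs.simple i ↔ t = cs.simple i := by
  constructor
  · intro hc
    have := congrArg (fun z => cs.simple i * z * cs.simple i) hc
    rw [← mul_assoc, ← mul_assoc, cs.simple_mul_simple_self, one_mul, mul_assoc,
      cs.simple_mul_simple_self, mul_one] at this
    simpa using this
  · intro h; rw [h, cs.simple_mul_simple_self, one_mul]

lemma phi_invol (cs : CoxeterSystem M W) (i : I) : Function.Involutive (phi cs i) := by
  rintro ⟨t, e⟩
  dsimp only [phi]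
  have hconj : cs.simple i * (cs.simple i * t * cs.simple i) * cs.simple i = t := by
    rw [← mul_assoc, ← mul_assoc, cs.simple_mul_simple_self, one_mul, mul_assoc,
      cs.simple_mul_simple_self, mul_one]
  by_cases h : t = cs.simple i
  · rw [if_pos h, if_pos (by rw [(simple_conj_eq_simple_iff cs i t)]; exact h), hconj,
      add_assoc, zmod2_add_self, add_zero]
  · rw [if_neg h, add_zero, if_neg (fun hc => h ((simple_conj_eq_simple_iff cs i t).mp hc)),
      add_zero, hconj]

/-- The cocycle permutation. -/
noncomputable def fperm (cs : CoxeterSystem M W) (i : I) : Equiv.Perm (W × ZMod 2) :=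
  (phi_invol cs i).toPerm

@[simp] lemma fperm_apply (cs : CoxeterSystem M W) (i : I) (p : W × ZMod 2) :
    fperm cs i p = phi cs i p := rfl

section liftable
variable (cs : CoxeterSystem M W) (i i' : I)

lemma simple_conj_p : cs.simple i' * (cs.simple i * cs.simple i') * (cs.simple i')⁻¹
    = (cs.simple i * cs.simple i')⁻¹ := by
  rw [cs.inv_simple, mul_inv_rev, cs.inv_simple, cs.inv_simple, ← mul_assoc,
    mul_assoc _ _ (cs.simple i')]
  rw [cs.simple_mul_simple_self, mul_one]

lemma simple_conj_pow' (k : ℕ) :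
    cs.simple i' * (cs.simple i * cs.simple i')^k
      = ((cs.simple i * cs.simple i')⁻¹)^k * cs.simple i' := by
  have := conj_pow (i := k) (a := cs.simple i') (b := cs.simple i * cs.simple i')
  rw [simple_conj_p] at this
  rw [cs.inv_simple] at this
  have h2 := congrArg (fun z => z * cs.simple i') this
  simp only [mul_assoc, cs.simple_mul_simple_self, mul_one] at h2
  rw [← h2, inv_pow]

lemma pinv_simple (m : ℕ) : ((cs.simple i * cs.simple i')^m)⁻¹ * cs.simple i'
    = cs.simple i' * (cs.simple i * cs.simple i')^m := by
  rw [← inv_pow, ← simple_conj_pow']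

lemma key1 (m : ℕ) :
    ((cs.simple i * cs.simple i')^m)⁻¹ * cs.simple i' * (cs.simple i * cs.simple i')^m
      = cs.simple i' * (cs.simple i * cs.simple i')^(2*m) := by
  rw [pinv_simple, mul_assoc, ← pow_add, two_mul]

lemma key2 (m : ℕ) :
    ((cs.simple i * cs.simple i')^m)⁻¹ * (cs.simple i' * cs.simple i * cs.simple i')
        * (cs.simple i * cs.simple i')^m
      = cs.simple i' * (cs.simple i * cs.simple i')^(2*m+1) := by
  rw [show cs.simple i' * cs.simple i * cs.simple i'
      = cs.simple i' * (cs.simple i * cs.simple i') from mul_assoc _ _ _]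
  rw [← mul_assoc ((cs.simple i * cs.simple i')^m)⁻¹ (cs.simple i') _, pinv_simple]
  rw [mul_assoc, mul_assoc, ← pow_succ', ← pow_add]
  have : m + (m+1) = 2*m+1 := by omega
  rw [this]

open Classical

lemma fpow_apply (m : ℕ) (t : W) (e : ZMod 2) :
    ((fperm cs i * fperm cs i')^m) (t, e)
      = ((cs.simple i * cs.simple i')^m * t * ((cs.simple i * cs.simple i')^m)⁻¹,
          e + ∑ j ∈ Finset.range (2*m),
            if t = cs.simple i' * (cs.simple i * cs.simple i')^j then (1 : ZMod 2) else 0) := by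
  induction m with
  | zero => simp
  | succ m ih =>
    rw [pow_succ', Equiv.Perm.mul_apply, ih]
    rw [Equiv.Perm.mul_apply]
    simp only [fperm_apply]
    simp only [phi]
    simp only [Prod.mk.injEq]
    constructor
    · rw [pow_succ']
      generalize (cs.simple i * cs.simple i')^m = Q
      rw [mul_inv_rev, mul_inv_rev, cs.inv_simple, cs.inv_simple]
      group
    · have hc1 : ((cs.simple i * cs.simple i')^m * t * (((cs.simple i * cs.simple i')^m))⁻¹
          = cs.simple i')
          ↔ (t = cs.simple i' * (cs.simple i * cs.simple i')^(2*m)) := by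
        rw [conj_eq_iff, key1]
      have hc2 : (cs.simple i' * ((cs.simple i * cs.simple i')^m * t
            * ((cs.simple i * cs.simple i')^m)⁻¹) * cs.simple i' = cs.simple i)
          ↔ (t = cs.simple i' * (cs.simple i * cs.simple i')^(2*m+1)) := by
        rw [show (cs.simple i' * ((cs.simple i * cs.simple i')^m * t
            * ((cs.simple i * cs.simple i')^m)⁻¹) * cs.simple i')
          = (cs.simple i' * ((cs.simple i * cs.simple i')^m * t
            * ((cs.simple i * cs.simple i')^m)⁻¹) * (cs.simple i')⁻¹) from by rw [cs.inv_simple]]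
        rw [conj_eq_iff, cs.inv_simple, conj_eq_iff, key2]
      simp only [hc1, hc2]
      rw [show 2*(m+1) = (2*m)+1+1 by ring, Finset.sum_range_succ, Finset.sum_range_succ]
      ring

end liftable

open Classical in
lemma fperm_liftable (cs : CoxeterSystem M W) :
    M.IsLiftable (fun i => fperm cs i) := by
  intro i i'
  apply Equiv.ext
  rintro ⟨t, e⟩
  rw [show ((fun i => fperm cs i) i * (fun i => fperm cs i) i') = fperm cs i * fperm cs i'
    from rfl]
  rw [fpow_apply, cs.simple_mul_simple_pow]
  have hsum : ∑ j ∈ Finset.range (2 * M i i'),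
      (if t = cs.simple i' * (cs.simple i * cs.simple i')^j then (1 : ZMod 2) else 0) = 0 := by
    rw [two_mul, sum_range_add']
    have : ∀ j, (cs.simple i * cs.simple i')^(M i i' + j)
        = (cs.simple i * cs.simple i')^j := by
      intro j; rw [pow_add, cs.simple_mul_simple_pow, one_mul]
    simp only [this]
    rw [← Finset.sum_add_distrib]
    rw [Finset.sum_congr rfl (fun j _ => zmod2_add_self _), Finset.sum_const_zero]
  rw [hsum]
  simp

noncomputable def Phi (cs : CoxeterSystem M W) : W →* Equiv.Perm (W × ZMod 2) :=
  cs.lift ⟨fun i => fperm cs i, fperm_liftable cs⟩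

@[simp] lemma Phi_simple (cs : CoxeterSystem M W) (i : I) :
    Phi cs (cs.simple i) = fperm cs i :=
  cs.lift_apply_simple (fperm_liftable cs) i


open Classical in
noncomputable def nu (cs : CoxeterSystem M W) : List I → W → ZMod 2
  | [], _ => 0
  | (i :: ω), t => nu cs ω t
      + if t = (cs.wordProd ω)⁻¹ * cs.simple i * cs.wordProd ω then 1 else 0

open Classical in
lemma Phi_wordProd (cs : CoxeterSystem M W) (ω : List I) (t : W) (e : ZMod 2) :
    Phi cs (cs.wordProd ω) (t, e)
      = (cs.wordProd ω * t * (cs.wordProd ω)⁻¹, e + nu cs ω t) := by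
  induction ω with
  | nil => simp [nu]
  | cons i ω ih =>
    rw [cs.wordProd_cons, map_mul, Equiv.Perm.mul_apply, ih, Phi_simple, fperm_apply]
    simp only [phi]
    simp only [Prod.mk.injEq]
    constructor
    · rw [mul_inv_rev, cs.inv_simple]
      group
    · rw [show (cs.wordProd ω * t * (cs.wordProd ω)⁻¹ = cs.simple i)
          ↔ (t = (cs.wordProd ω)⁻¹ * cs.simple i * cs.wordProd ω) from conj_eq_iff _ _ _]
      show _ = _ + nu cs (i :: ω) t
      rw [show nu cs (i :: ω) t = nu cs ω t
          + if t = (cs.wordProd ω)⁻¹ * cs.simple i * cs.wordProd ω then 1 else 0 from rfl]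
      ring

noncomputable def eta (cs : CoxeterSystem M W) (w t : W) : ZMod 2 := (Phi cs w (t, 0)).2

lemma eta_nu (cs : CoxeterSystem M W) (ω : List I) (t : W) :
    eta cs (cs.wordProd ω) t = nu cs ω t := by
  simp [eta, Phi_wordProd]

lemma Phi_apply (cs : CoxeterSystem M W) (w t : W) (e : ZMod 2) :
    Phi cs w (t, e) = (w * t * w⁻¹, e + eta cs w t) := by
  obtain ⟨ω, hω⟩ := cs.wordProd_surjective w
  subst hω
  rw [Phi_wordProd, eta_nu]

lemma eta_mul (cs : CoxeterSystem M W) (a b t : W) :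
    eta cs (a * b) t = eta cs b t + eta cs a (b * t * b⁻¹) := by
  have h1 : Phi cs (a * b) (t, 0) = Phi cs a (Phi cs b (t, 0)) := by
    rw [map_mul, Equiv.Perm.mul_apply]
  rw [Phi_apply, Phi_apply, Phi_apply] at h1
  have := congrArg Prod.snd h1
  simpa using this

@[simp] lemma eta_one (cs : CoxeterSystem M W) (t : W) : eta cs 1 t = 0 := by
  simp [eta]

lemma eta_inv (cs : CoxeterSystem M W) (a t : W) :
    eta cs a⁻¹ (a * t * a⁻¹) = eta cs a t := by
  have h : eta cs (a⁻¹ * a) t = eta cs a t + eta cs a⁻¹ (a * t * a⁻¹) := eta_mul cs a⁻¹ a t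
  rw [inv_mul_cancel, eta_one] at h
  linear_combination -h - zmod2_add_self (eta cs a t)

lemma eta_simple_self (cs : CoxeterSystem M W) (j : I) :
    eta cs (cs.simple j) (cs.simple j) = 1 := by
  simp [eta, phi]

lemma eta_reflection (cs : CoxeterSystem M W) {t : W} (ht : cs.IsReflection t) :
    eta cs t t = 1 := by
  obtain ⟨w, j, rfl⟩ := ht
  have h1 : eta cs (w * cs.simple j * w⁻¹) (w * cs.simple j * w⁻¹)
      = eta cs w⁻¹ (w * cs.simple j * w⁻¹) + eta cs (w * cs.simple j)
          (w⁻¹ * (w * cs.simple j * w⁻¹) * w⁻¹⁻¹) := by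
    rw [← eta_mul]
  have h2 : w⁻¹ * (w * cs.simple j * w⁻¹) * w⁻¹⁻¹ = cs.simple j := by group
  have h3 : eta cs (w * cs.simple j) (cs.simple j)
      = eta cs (cs.simple j) (cs.simple j)
        + eta cs w (cs.simple j * cs.simple j * (cs.simple j)⁻¹) := eta_mul cs w (cs.simple j) _
  have h4 : cs.simple j * cs.simple j * (cs.simple j)⁻¹ = cs.simple j := by group
  have h5 : eta cs w⁻¹ (w * cs.simple j * w⁻¹) = eta cs w (cs.simple j) := eta_inv cs w _
  rw [h2] at h1
  rw [h4, eta_simple_self] at h3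
  rw [h5, h3] at h1
  rw [h1]
  linear_combination zmod2_add_self (eta cs w (cs.simple j))

open Classical in
lemma nu_zero_of_not_mem (cs : CoxeterSystem M W) {ω : List I} {t : W}
    (h : t ∉ cs.rightInvSeq ω) : nu cs ω t = 0 := by
  induction ω with
  | nil => rfl
  | cons i ω ih =>
    rw [show cs.rightInvSeq (i :: ω)
        = (cs.wordProd ω)⁻¹ * cs.simple i * cs.wordProd ω :: cs.rightInvSeq ω from rfl] at h
    simp only [List.mem_cons, not_or] at h
    rw [show nu cs (i :: ω) t = nu cs ω t
        + if t = (cs.wordProd ω)⁻¹ * cs.simple i * cs.wordProd ω then 1 else 0 from rfl]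
    rw [ih h.2, if_neg h.1, add_zero]

lemma mem_rightInvSeq_of_isRightInversion (cs : CoxeterSystem M W) {ω : List I}
    (hω : cs.IsReduced ω) {t : W} (ht : cs.IsRightInversion (cs.wordProd ω) t) :
    t ∈ cs.rightInvSeq ω := by
  by_contra hmem
  have h1 : eta cs (cs.wordProd ω) t = 0 := by
    rw [eta_nu]; exact nu_zero_of_not_mem cs hmem
  obtain ⟨θ, hred, hv⟩ := cs.exists_reduced_word' (cs.wordProd ω * t)
  have htt : t * t = 1 := ht.1.mul_self
  have hvt : (cs.wordProd ω * t) * t = cs.wordProd ω := by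
    rw [mul_assoc, htt, mul_one]
  have h2 : eta cs (cs.wordProd ω) t
      = eta cs t t + eta cs (cs.wordProd ω * t) (t * t * t⁻¹) := by
    rw [← eta_mul, hvt]
  have h3 : t * t * t⁻¹ = t := by group
  have h4 : eta cs (cs.wordProd ω * t) t = 0 := by
    rw [hv, eta_nu]
    apply nu_zero_of_not_mem
    intro hmem'
    have := (cs.isRightInversion_of_mem_rightInvSeq hred hmem').2
    rw [← hv, hvt] at this
    exact absurd ht.2 (by omega)
  rw [h3, h4, eta_reflection cs ht.1, add_zero] at h2
  rw [h2] at h1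
  exact absurd h1 (by decide)

lemma right_exchange (cs : CoxeterSystem M W) {ω : List I}
    (hω : cs.IsReduced ω) {t : W} (ht : cs.IsRightInversion (cs.wordProd ω) t) :
    ∃ k < ω.length, cs.wordProd ω * t = cs.wordProd (ω.eraseIdx k) := by
  have hmem := mem_rightInvSeq_of_isRightInversion cs hω ht
  obtain ⟨k, hk, he⟩ := List.mem_iff_getElem.mp hmem
  rw [cs.length_rightInvSeq] at hk
  refine ⟨k, hk, ?_⟩
  rw [← cs.wordProd_mul_getD_rightInvSeq ω k]
  congr 1
  rw [List.getD_eq_getElem _ 1 (by rw [cs.length_rightInvSeq]; exact hk)]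
  exact he.symm

lemma left_exchange (cs : CoxeterSystem M W) {ω : List I}
    (hω : cs.IsReduced ω) {t : W} (ht : cs.IsLeftInversion (cs.wordProd ω) t) :
    ∃ k < ω.length, t * cs.wordProd ω = cs.wordProd (ω.eraseIdx k) := by
  have hrev : cs.IsRightInversion (cs.wordProd ω.reverse) t := by
    rw [cs.wordProd_reverse]
    exact cs.isRightInversion_inv_iff.mpr ht
  have hmem := mem_rightInvSeq_of_isRightInversion cs
    ((cs.isReduced_reverse_iff ω).mpr hω) hrev
  rw [cs.rightInvSeq_reverse, List.mem_reverse] at hmem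
  obtain ⟨k, hk, he⟩ := List.mem_iff_getElem.mp hmem
  rw [cs.length_leftInvSeq] at hk
  refine ⟨k, hk, ?_⟩
  rw [← cs.getD_leftInvSeq_mul_wordProd ω k]
  congr 1
  rw [List.getD_eq_getElem _ 1 (by rw [cs.length_leftInvSeq]; exact hk)]
  exact he.symm



/-! ### Deletion property -/

lemma delete_to_reduced (cs : CoxeterSystem M W) (ω : List I) :
    ∃ ω', ω' <+ ω ∧ cs.IsReduced ω' ∧ cs.wordProd ω' = cs.wordProd ω := by
  induction ω with
  | nil => exact ⟨[], List.Sublist.refl _, by simp [CoxeterSystem.IsReduced], rfl⟩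
  | cons i ρ ih =>
    obtain ⟨ρ', hsub, hred, hprod⟩ := ih
    rcases cs.length_simple_mul (cs.wordProd ρ') i with hup | hdown
    · refine ⟨i :: ρ', List.cons_sublist_cons.mpr hsub, ?_, ?_⟩
      · show cs.length (cs.wordProd (i :: ρ')) = _
        rw [cs.wordProd_cons, hup, hred]
        simp
      · rw [cs.wordProd_cons, cs.wordProd_cons, hprod]
    · have hinv : cs.IsLeftInversion (cs.wordProd ρ') (cs.simple i) :=
        ⟨cs.isReflection_simple i, by omega⟩
      obtain ⟨k, hk, he⟩ := left_exchange cs hred hinv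
      refine ⟨ρ'.eraseIdx k, ((List.eraseIdx_sublist ρ' k).trans hsub).trans
        (List.sublist_cons_self i ρ), ?_, ?_⟩
      · show cs.length (cs.wordProd (ρ'.eraseIdx k)) = _
        rw [← he]
        have h1 : (ρ'.eraseIdx k).length + 1 = ρ'.length := List.length_eraseIdx_add_one hk
        have h2 : cs.length (cs.wordProd ρ') = ρ'.length := hred
        omega
      · rw [← he, cs.wordProd_cons, hprod]

/-! ### The chain ("Bruhat") order -/

/-- One step of the Bruhat chain order. -/
def bstep (cs : CoxeterSystem M W) (u v : W) : Prop :=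
  ∃ t, cs.IsReflection t ∧ v = u * t ∧ cs.length u < cs.length v

/-- The Bruhat chain order. -/
def ble (cs : CoxeterSystem M W) : W → W → Prop := Relation.ReflTransGen (bstep cs)

lemma ble_length {cs : CoxeterSystem M W} {u w : W} (h : ble cs u w) :
    cs.length u ≤ cs.length w := by
  induction h with
  | refl => exact le_refl _
  | tail _ hbc ih => obtain ⟨t, _, _, hlt⟩ := hbc; omega

/-- The subword property, as a predicate. -/
def SW (cs : CoxeterSystem M W) (u w : W) : Prop :=
  ∀ Ω : List I, cs.IsReduced Ω → cs.wordProd Ω = w →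
    ∃ Ω', Ω' <+ Ω ∧ cs.IsReduced Ω' ∧ cs.wordProd Ω' = u

lemma sw_step (cs : CoxeterSystem M W) {Ω : List I} (hred : cs.IsReduced Ω) {t : W}
    (ht : cs.IsReflection t) (hlt : cs.length (cs.wordProd Ω * t) < cs.length (cs.wordProd Ω)) :
    ∃ Ω', Ω' <+ Ω ∧ cs.IsReduced Ω' ∧ cs.wordProd Ω' = cs.wordProd Ω * t := by
  obtain ⟨k, hk, he⟩ := right_exchange cs hred ⟨ht, hlt⟩
  obtain ⟨Ω', hsub, hred', hprod⟩ := delete_to_reduced cs (Ω.eraseIdx k)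
  exact ⟨Ω', hsub.trans (Ω.eraseIdx_sublist k), hred', by rw [hprod, ← he]⟩

lemma ble_sw {cs : CoxeterSystem M W} {u w : W} (h : ble cs u w) : SW cs u w := by
  induction h with
  | refl => exact fun Ω h1 h2 => ⟨Ω, List.Sublist.refl _, h1, h2⟩
  | @tail z y hab hbc ih =>
    obtain ⟨t, htr, rfl, hlt⟩ := hbc
    intro Ω h1 h2
    have hzt : cs.wordProd Ω * t = z := by rw [h2, mul_assoc, htr.mul_self, mul_one]
    have hlt' : cs.length (cs.wordProd Ω * t) < cs.length (cs.wordProd Ω) := by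
      rw [hzt, h2]; exact hlt
    obtain ⟨Θ, hsubΘ, hredΘ, hprodΘ⟩ := sw_step cs h1 htr hlt'
    rw [hzt] at hprodΘ
    obtain ⟨Ω', hsub', hred', hprod'⟩ := ih Θ hredΘ hprodΘ
    exact ⟨Ω', hsub'.trans hsubΘ, hred', hprod'⟩


/-! ### The subword property: any sublist of a reduced word is `ble` the word -/

open Classical in
/-- Multiply by `s j` on the right if that increases length. -/
noncomputable def mel (cs : CoxeterSystem M W) (j : I) (y : W) : W :=
  if cs.length y < cs.length (y * cs.simple j) then y * cs.simple j else y

lemma mstep (cs : CoxeterSystem M W) {n : ℕ}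
    (HT1 : ∀ ω : List I, ω.length < n → cs.IsReduced ω →
      ∀ ω' : List I, ω' <+ ω → ble cs (cs.wordProd ω') (cs.wordProd ω))
    (j : I) {y y' : W} (h : bstep cs y y') (hbound : cs.length y' < n) :
    ble cs (mel cs j y) (mel cs j y') := by
  classical
  obtain ⟨t, htr, hyt, hlt⟩ := h
  by_cases h1 : cs.length y < cs.length (y * cs.simple j)
  <;> by_cases h2 : cs.length y' < cs.length (y' * cs.simple j)
  · -- both up : a single chain step via the reflection s j * t * s j
    rw [mel, mel, if_pos h1, if_pos h2]
    apply Relation.ReflTransGen.single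
    refine ⟨cs.simple j * t * (cs.simple j)⁻¹, htr.conj (cs.simple j), ?_, ?_⟩
    · rw [hyt, cs.inv_simple, ← mul_assoc, ← mul_assoc, mul_assoc y (cs.simple j) (cs.simple j),
        cs.simple_mul_simple_self, mul_one]
    · rcases cs.length_mul_simple y j with c1 | c1 <;> rcases cs.length_mul_simple y' j
        with c2 | c2 <;> omega
  · -- y up, y' down
    rw [mel, mel, if_pos h1, if_neg h2]
    obtain ⟨Θ, hΘred, hΘprod⟩ := cs.exists_reduced_word' (y' * cs.simple j)
    have hπ : cs.wordProd (Θ ++ [j]) = y' := by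
      rw [cs.wordProd_append, cs.wordProd_singleton, ← hΘprod,
        cs.simple_mul_simple_cancel_right]
    have hlen' : cs.length (y' * cs.simple j) + 1 = cs.length y' := by
      rcases cs.length_mul_simple y' j with c | c <;> omega
    have hredword : cs.IsReduced (Θ ++ [j]) := by
      show cs.length (cs.wordProd (Θ ++ [j])) = _
      rw [hπ, List.length_append, List.length_singleton, ← hΘred, ← hΘprod]
      omega
    obtain ⟨ζ, hζsub, hζred, hζprod⟩ :=
      ble_sw (Relation.ReflTransGen.single ⟨t, htr, hyt, hlt⟩) (Θ ++ [j]) hredword hπ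
    rw [List.sublist_append_iff] at hζsub
    obtain ⟨ζ₁, ζ₂, rfl, hζ₁, hζ₂⟩ := hζsub
    rcases List.sublist_singleton.mp hζ₂ with rfl | rfl
    · -- ζ₂ = [] : the witness avoids the final letter
      rw [List.append_nil] at hζprod
      have hsub2 : ζ₁ ++ [j] <+ Θ ++ [j] := hζ₁.append (List.Sublist.refl [j])
      have hprod2 : cs.wordProd (ζ₁ ++ [j]) = y * cs.simple j := by
        rw [cs.wordProd_append, cs.wordProd_singleton, hζprod]
      have hlenword : (Θ ++ [j]).length < n := by
        have : (Θ ++ [j]).length = cs.length y' := by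
          rw [← hredword, hπ]
        omega
      have := HT1 (Θ ++ [j]) hlenword hredword (ζ₁ ++ [j]) hsub2
      rwa [hprod2, hπ] at this
    · -- ζ₂ = [j] : impossible since ℓ(y sⱼ) > ℓ(y)
      exfalso
      have hζprod' : cs.wordProd ζ₁ = y * cs.simple j := by
        rw [cs.wordProd_append, cs.wordProd_singleton] at hζprod
        rw [← hζprod, cs.simple_mul_simple_cancel_right]
      have hle : cs.length (y * cs.simple j) ≤ ζ₁.length := by
        rw [← hζprod']; exact cs.length_wordProd_le ζ₁
      have : cs.length (cs.wordProd (ζ₁ ++ [j])) = (ζ₁ ++ [j]).length := hζred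
      rw [hζprod] at this
      simp only [List.length_append, List.length_singleton] at this
      omega
  · -- y down, y' up
    rw [mel, mel, if_neg h1, if_pos h2]
    have step1 : bstep cs y y' := ⟨t, htr, hyt, hlt⟩
    have step2 : bstep cs y' (y' * cs.simple j) :=
      ⟨cs.simple j, cs.isReflection_simple j, rfl, h2⟩
    exact (Relation.ReflTransGen.single step1).tail step2
  · -- both down
    rw [mel, mel, if_neg h1, if_neg h2]
    exact Relation.ReflTransGen.single ⟨t, htr, hyt, hlt⟩

lemma mchain (cs : CoxeterSystem M W) {n : ℕ}
    (HT1 : ∀ ω : List I, ω.length < n → cs.IsReduced ω →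
      ∀ ω' : List I, ω' <+ ω → ble cs (cs.wordProd ω') (cs.wordProd ω))
    (j : I) {u v : W} (hc : ble cs u v) (hb : cs.length v < n) :
    ble cs (mel cs j u) (mel cs j v) := by
  induction hc with
  | refl => exact Relation.ReflTransGen.refl
  | @tail b c hab hbc ih =>
    have hbn : cs.length b < n := by
      obtain ⟨t, _, _, hlt⟩ := hbc; omega
    exact (ih hbn).trans (mstep cs HT1 j hbc hb)

lemma sublist_ble_aux (cs : CoxeterSystem M W) :
    ∀ n : ℕ, ∀ ω : List I, ω.length = n → cs.IsReduced ω →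
      ∀ ω' : List I, ω' <+ ω → ble cs (cs.wordProd ω') (cs.wordProd ω) := by
  intro n
  induction n using Nat.strong_induction_on with
  | _ n ih =>
    intro ω hlen hred ω' hsub
    rcases List.eq_nil_or_concat' ω with rfl | ⟨ρ, j, rfl⟩
    · rw [List.sublist_nil.mp hsub]; exact Relation.ReflTransGen.refl
    · have hρred : cs.IsReduced ρ := by
        have := CoxeterSystem.IsReduced.take hred ρ.length
        rwa [List.take_left] at this
      have hρlen : ρ.length + 1 = n := by
        rw [← hlen, List.length_append, List.length_singleton]
      have hw : cs.wordProd (ρ ++ [j]) = cs.wordProd ρ * cs.simple j := by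
        rw [cs.wordProd_append, cs.wordProd_singleton]
      have hlw : cs.length (cs.wordProd (ρ ++ [j])) = ρ.length + 1 := by
        rw [hred, List.length_append, List.length_singleton]
      have hstepv : bstep cs (cs.wordProd ρ) (cs.wordProd (ρ ++ [j])) := by
        refine ⟨cs.simple j, cs.isReflection_simple j, hw, ?_⟩
        rw [hlw, hρred]
        omega
      have HT1 : ∀ ω0 : List I, ω0.length < n → cs.IsReduced ω0 →
          ∀ ω0' : List I, ω0' <+ ω0 → ble cs (cs.wordProd ω0') (cs.wordProd ω0) :=
        fun ω0 hlt hred0 ω0' hsub0 => ih ω0.length hlt ω0 rfl hred0 ω0' hsub0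
      rw [List.sublist_append_iff] at hsub
      obtain ⟨ω₁, ω₂, rfl, h₁, h₂⟩ := hsub
      have hu₁ : ble cs (cs.wordProd ω₁) (cs.wordProd ρ) :=
        ih ρ.length (by omega) ρ rfl hρred ω₁ h₁
      rcases List.sublist_singleton.mp h₂ with rfl | rfl
      · rw [List.append_nil]
        exact hu₁.tail hstepv
      · have hprod : cs.wordProd (ω₁ ++ [j]) = cs.wordProd ω₁ * cs.simple j := by
          rw [cs.wordProd_append, cs.wordProd_singleton]
        rcases cs.length_mul_simple (cs.wordProd ω₁) j with hup | hdown
        · -- use the monotone chain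
          have hmel := mchain cs HT1 j hu₁ (by rw [hρred]; omega)
          have e1 : mel cs j (cs.wordProd ω₁) = cs.wordProd ω₁ * cs.simple j := by
            rw [mel, if_pos (by omega)]
          have e2 : mel cs j (cs.wordProd ρ) = cs.wordProd ρ * cs.simple j := by
            rw [mel, if_pos (by rw [hρred, ← hw, hlw]; omega)]
          rw [e1, e2, ← hw, ← hprod] at hmel
          exact hmel
        · -- the extra letter decreases length
          have hstepdown : bstep cs (cs.wordProd (ω₁ ++ [j])) (cs.wordProd ω₁) := by
            refine ⟨cs.simple j, cs.isReflection_simple j, ?_, ?_⟩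
            · rw [hprod, cs.simple_mul_simple_cancel_right]
            · rw [hprod]; omega
          exact ((Relation.ReflTransGen.single hstepdown).trans hu₁).tail hstepv

lemma sublist_ble (cs : CoxeterSystem M W) {ω ω' : List I} (hred : cs.IsReduced ω)
    (hsub : ω' <+ ω) : ble cs (cs.wordProd ω') (cs.wordProd ω) :=
  sublist_ble_aux cs ω.length ω rfl hred ω' hsub




lemma bruhatLE_of_ble {cs : CoxeterSystem M W} {u w : W} (h : ble cs u w) :
    bruhatLE cs u w := by
  obtain ⟨Ω, hΩred, hΩprod⟩ := cs.exists_reduced_word' w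
  obtain ⟨Ω', hsub, hred', hprod'⟩ := ble_sw h Ω hΩred hΩprod.symm
  exact ⟨Ω, hΩprod.symm, hΩred, Ω', hsub, hprod', hred'⟩

lemma ble_of_bruhatLE {cs : CoxeterSystem M W} {u w : W} (h : bruhatLE cs u w) :
    ble cs u w := by
  obtain ⟨ω, hπ, hred, ω', hsub, hπ', hred'⟩ := h
  have := sublist_ble cs hred hsub
  rwa [hπ, hπ'] at this

lemma bruhatLE_refl (cs : CoxeterSystem M W) (w : W) : bruhatLE cs w w := by
  obtain ⟨Ω, hΩred, hΩprod⟩ := cs.exists_reduced_word' w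
  exact ⟨Ω, hΩprod.symm, hΩred, Ω, List.Sublist.refl _, hΩprod.symm, hΩred⟩

lemma bruhatLE_trans {cs : CoxeterSystem M W} {u v w : W}
    (h1 : bruhatLE cs u v) (h2 : bruhatLE cs v w) : bruhatLE cs u w :=
  bruhatLE_of_ble ((ble_of_bruhatLE h1).trans (ble_of_bruhatLE h2))

lemma bruhatLE_length {cs : CoxeterSystem M W} {u w : W} (h : bruhatLE cs u w) :
    cs.length u ≤ cs.length w := by
  obtain ⟨ω, hπ, hred, ω', hsub, hπ', hred'⟩ := h
  have h1 : cs.length u = ω'.length := by rw [← hπ']; exact hred'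
  have h2 : cs.length w = ω.length := by rw [← hπ]; exact hred
  have := hsub.length_le
  omega

lemma bruhatLE_eq_of_length_ge {cs : CoxeterSystem M W} {u w : W} (h : bruhatLE cs u w)
    (hlen : cs.length w ≤ cs.length u) : u = w := by
  obtain ⟨ω, hπ, hred, ω', hsub, hπ', hred'⟩ := h
  have h1 : cs.length u = ω'.length := by rw [← hπ']; exact hred'
  have h2 : cs.length w = ω.length := by rw [← hπ]; exact hred
  have h3 := hsub.length_le
  have : ω' = ω := hsub.eq_of_length (by omega)
  rw [← hπ, ← hπ', this]



lemma wordProd_mem_parabolic {cs : CoxeterSystem M W} {J : Set I} {μ : List I}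
    (h : ∀ l ∈ μ, l ∈ J) : cs.wordProd μ ∈ parabolic cs J := by
  induction μ with
  | nil => rw [cs.wordProd_nil]; exact one_mem _
  | cons i μ ih =>
    rw [cs.wordProd_cons]
    exact mul_mem (Subgroup.subset_closure ⟨i, h i (List.mem_cons_self), rfl⟩)
      (ih (fun l hl => h l (List.mem_cons_of_mem i hl)))

lemma exists_reduced_word_of_mem_parabolic {cs : CoxeterSystem M W} {J : Set I} {y : W}
    (h : y ∈ parabolic cs J) :
    ∃ μ : List I, (∀ l ∈ μ, l ∈ J) ∧ cs.IsReduced μ ∧ cs.wordProd μ = y := by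
  have hword : ∃ μ : List I, (∀ l ∈ μ, l ∈ J) ∧ cs.wordProd μ = y := by
    induction h using Subgroup.closure_induction with
    | mem z hz =>
      obtain ⟨j, hj, rfl⟩ := hz
      exact ⟨[j], by simpa using hj, cs.wordProd_singleton j⟩
    | one => exact ⟨[], by simp, cs.wordProd_nil⟩
    | mul a b _ _ iha ihb =>
      obtain ⟨μa, ha, rfl⟩ := iha
      obtain ⟨μb, hb, rfl⟩ := ihb
      exact ⟨μa ++ μb, fun l hl => by
        rcases List.mem_append.mp hl with h' | h'
        exacts [ha l h', hb l h'], (cs.wordProd_append μa μb).symm ▸ rfl⟩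
    | inv a _ iha =>
      obtain ⟨μa, ha, rfl⟩ := iha
      exact ⟨μa.reverse, fun l hl => ha l (List.mem_reverse.mp hl), cs.wordProd_reverse μa⟩
  obtain ⟨μ, hμJ, hμprod⟩ := hword
  obtain ⟨μ', hsub, hred, hprod⟩ := delete_to_reduced cs μ
  exact ⟨μ', fun l hl => hμJ l (hsub.subset hl), hred, by rw [hprod, hμprod]⟩



/-! ### Minimal coset representatives -/

open List in
lemma exists_min_in_coset (cs : CoxeterSystem M W) (J : Set I) (w : W) :
    ∃ a : W, w⁻¹ * a ∈ parabolic cs J ∧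
      ∀ b : W, w⁻¹ * b ∈ parabolic cs J → cs.length a ≤ cs.length b := by
  classical
  set S : Set ℕ := {n | ∃ b : W, w⁻¹ * b ∈ parabolic cs J ∧ cs.length b = n} with hS
  have hne : S.Nonempty := ⟨cs.length w, w, by simp [one_mem], rfl⟩
  obtain ⟨a, ha, hlen⟩ := Nat.sInf_mem hne
  refine ⟨a, ha, fun b hb => ?_⟩
  rw [hlen]
  exact Nat.sInf_le ⟨b, hb, rfl⟩

/-- A length-minimal element of its own right coset `a W_J`. -/
def IsMinCoset (cs : CoxeterSystem M W) (J : Set I) (a : W) : Prop :=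
  ∀ b : W, a⁻¹ * b ∈ parabolic cs J → cs.length a ≤ cs.length b

lemma exists_isMinCoset (cs : CoxeterSystem M W) (J : Set I) (w : W) :
    ∃ a : W, w⁻¹ * a ∈ parabolic cs J ∧ IsMinCoset cs J a := by
  obtain ⟨a, ha, hmin⟩ := exists_min_in_coset cs J w
  refine ⟨a, ha, fun b hb => hmin b ?_⟩
  have : w⁻¹ * b = (w⁻¹ * a) * (a⁻¹ * b) := by group
  rw [this]
  exact mul_mem ha hb

lemma isMinCoset_mem_minRight {cs : CoxeterSystem M W} {J : Set I} {a : W}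
    (ha : IsMinCoset cs J a) : a ∈ minRight cs J := by
  intro j hj
  have hmem : a⁻¹ * (a * cs.simple j) ∈ parabolic cs J := by
    rw [← mul_assoc, inv_mul_cancel, one_mul]
    exact Subgroup.subset_closure ⟨j, hj, rfl⟩
  have h1 := ha _ hmem
  have h2 := cs.length_mul_simple_ne a j
  omega

open List in
lemma isMinCoset_additive {cs : CoxeterSystem M W} {J : Set I} {a : W}
    (ha : IsMinCoset cs J a) :
    ∀ n : ℕ, ∀ y ∈ parabolic cs J, cs.length y = n →
      cs.length (a * y) = cs.length a + cs.length y := by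
  intro n
  induction n with
  | zero =>
    intro y _ hy
    rw [cs.length_eq_zero_iff.mp hy, mul_one, cs.length_one, add_zero]
  | succ n ihn =>
    intro y hy hylen
    obtain ⟨κ, hκJ, hκred, hκprod⟩ := exists_reduced_word_of_mem_parabolic hy
    have hκlen : κ.length = n + 1 := by rw [← hylen, ← hκprod]; exact hκred.symm
    rcases List.eq_nil_or_concat' κ with rfl | ⟨κ', j, rfl⟩
    · simp at hκlen
    · have hκ'red : cs.IsReduced κ' := by
        have := CoxeterSystem.IsReduced.take hκred κ'.length
        rwa [List.take_left] at this
      have hκ'len : κ'.length = n := by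
        rw [List.length_append, List.length_singleton] at hκlen; omega
      have hy' : cs.wordProd κ' ∈ parabolic cs J :=
        wordProd_mem_parabolic (fun l hl => hκJ l (List.mem_append_left _ hl))
      have hy'len : cs.length (cs.wordProd κ') = n := by rw [hκ'red]; exact hκ'len
      have hih := ihn (cs.wordProd κ') hy' hy'len
      have hysplit : y = cs.wordProd κ' * cs.simple j := by
        rw [← hκprod, cs.wordProd_append, cs.wordProd_singleton]
      -- now show that multiplying by s j increases the length
      have hkey : cs.length (a * cs.wordProd κ' * cs.simple j)
          = cs.length (a * cs.wordProd κ') + 1 := by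
        rcases cs.length_mul_simple (a * cs.wordProd κ') j with hc | hc
        · exact hc
        · -- impossible: apply the exchange property
          exfalso
          obtain ⟨ωa, hωared, hωaprod⟩ := cs.exists_reduced_word' a
          have hword : cs.wordProd (ωa ++ κ') = a * cs.wordProd κ' := by
            rw [cs.wordProd_append, ← hωaprod]
          have hwred : cs.IsReduced (ωa ++ κ') := by
            show cs.length (cs.wordProd (ωa ++ κ')) = _
            rw [hword, List.length_append, hih, hy'len]
            have : cs.length a = ωa.length := by rw [hωaprod]; exact hωared
            omega
          have hinv : cs.IsRightInversion (cs.wordProd (ωa ++ κ')) (cs.simple j) := by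
            refine ⟨cs.isReflection_simple j, ?_⟩
            rw [hword]; omega
          obtain ⟨k, hk, he⟩ := right_exchange cs hwred hinv
          rw [List.length_append] at hk
          rcases lt_or_ge k ωa.length with hczone | hczone
          · -- erased inside the word for a : contradicts minimality of a
            rw [List.eraseIdx_append_of_lt_length hczone] at he
            have hbval : a * cs.wordProd κ' * cs.simple j
                = cs.wordProd (ωa.eraseIdx k) * cs.wordProd κ' := by
              rw [← cs.wordProd_append, ← he, hword]
            have hb : a⁻¹ * (cs.wordProd (ωa.eraseIdx k)) ∈ parabolic cs J := by
              have : cs.wordProd (ωa.eraseIdx k)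
                  = a * cs.wordProd κ' * cs.simple j * (cs.wordProd κ')⁻¹ := by
                rw [hbval]; group
              rw [this]
              have m1 : cs.simple j ∈ parabolic cs J := Subgroup.subset_closure
                ⟨j, hκJ j (List.mem_append_right _ (List.mem_singleton_self j)), rfl⟩
              have : a⁻¹ * (a * cs.wordProd κ' * cs.simple j * (cs.wordProd κ')⁻¹)
                  = cs.wordProd κ' * cs.simple j * (cs.wordProd κ')⁻¹ := by group
              rw [this]
              exact mul_mem (mul_mem hy' m1) (inv_mem hy')
            have hmin := ha _ hb
            have : cs.length (cs.wordProd (ωa.eraseIdx k)) ≤ (ωa.eraseIdx k).length :=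
              cs.length_wordProd_le _
            have hera : (ωa.eraseIdx k).length + 1 = ωa.length :=
              List.length_eraseIdx_add_one hczone
            have halen : cs.length a = ωa.length := by rw [hωaprod]; exact hωared
            omega
          · -- erased inside the word for y' : contradicts reducedness of κ
            rw [List.eraseIdx_append_of_length_le hczone] at he
            have : a * (cs.wordProd κ' * cs.simple j)
                = a * cs.wordProd (κ'.eraseIdx (k - ωa.length)) := by
              rw [← mul_assoc, ← hword, he, cs.wordProd_append, ← hωaprod]
            have h5 : cs.wordProd κ' * cs.simple j
                = cs.wordProd (κ'.eraseIdx (k - ωa.length)) := by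
              exact mul_left_cancel this
            have h6 : cs.length (cs.wordProd κ' * cs.simple j)
                ≤ (κ'.eraseIdx (k - ωa.length)).length := by
              rw [h5]; exact cs.length_wordProd_le _
            have h7 : (κ'.eraseIdx (k - ωa.length)).length + 1 = κ'.length :=
              List.length_eraseIdx_add_one (by omega)
            have h8 : cs.length (cs.wordProd κ' * cs.simple j) = n + 1 := by
              rw [← hysplit]; exact hylen
            omega
      rw [hysplit, ← mul_assoc, hkey, hih, hy'len, ← hysplit, hylen]
      omega

lemma isMinCoset_mul_length {cs : CoxeterSystem M W} {J : Set I} {a : W}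
    (ha : IsMinCoset cs J a) {y : W} (hy : y ∈ parabolic cs J) :
    cs.length (a * y) = cs.length a + cs.length y :=
  isMinCoset_additive ha (cs.length y) y hy rfl

open List in
lemma isMinCoset_unique {cs : CoxeterSystem M W} {J : Set I} {a a' : W}
    (ha : IsMinCoset cs J a) (ha' : a' ∈ minRight cs J)
    (hco : a⁻¹ * a' ∈ parabolic cs J) : a' = a := by
  set y := a⁻¹ * a' with hy
  have hay : a * y = a' := by rw [hy]; group
  by_cases hy1 : y = 1
  · rw [hy1, mul_one] at hay; exact hay.symm
  · exfalso
    obtain ⟨κ, hκJ, hκred, hκprod⟩ := exists_reduced_word_of_mem_parabolic hco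
    rcases List.eq_nil_or_concat' κ with rfl | ⟨κ', j, rfl⟩
    · exact hy1 (by rw [← hκprod, cs.wordProd_nil])
    · have hj : j ∈ J := hκJ j (List.mem_append_right _ (List.mem_singleton_self j))
      have hκ'red : cs.IsReduced κ' := by
        have := CoxeterSystem.IsReduced.take hκred κ'.length
        rwa [List.take_left] at this
      have hys : y * cs.simple j = cs.wordProd κ' := by
        have : cs.wordProd (κ' ++ [j]) = cs.wordProd κ' * cs.simple j := by
          rw [cs.wordProd_append, cs.wordProd_singleton]
        rw [← hκprod, this, mul_assoc, cs.simple_mul_simple_self, mul_one]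
      have hlen1 : cs.length (y * cs.simple j) = κ'.length := by
        rw [hys]; exact hκ'red
      have hleny : cs.length y = κ'.length + 1 := by
        rw [← hκprod, hκred, List.length_append, List.length_singleton]
      have hmem' : y * cs.simple j ∈ parabolic cs J := by
        rw [hys]
        exact wordProd_mem_parabolic (fun l hl => hκJ l (List.mem_append_left _ hl))
      have h2 : cs.length (a' * cs.simple j) = cs.length a + κ'.length := by
        have : a' * cs.simple j = a * (y * cs.simple j) := by rw [← hay]; group
        rw [this, isMinCoset_mul_length ha hmem', hlen1]
      have h3 : cs.length a' = cs.length a + κ'.length + 1 := by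
        rw [← hay, isMinCoset_mul_length ha hco, hleny]
        omega
      have h4 := ha' j hj
      omega

lemma minRight_unique {cs : CoxeterSystem M W} {J : Set I} {a a' : W}
    (ha : a ∈ minRight cs J) (ha' : a' ∈ minRight cs J)
    (hco : a⁻¹ * a' ∈ parabolic cs J) : a = a' := by
  obtain ⟨m, hm, hmmin⟩ := exists_isMinCoset cs J a
  have h1 : a = m := isMinCoset_unique hmmin ha (by
    have : m⁻¹ * a = (a⁻¹ * m)⁻¹ := by group
    rw [this]; exact inv_mem hm)
  have h2 : a' = m := isMinCoset_unique hmmin ha' (by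
    have : m⁻¹ * a' = (a⁻¹ * m)⁻¹ * (a⁻¹ * a') := by group
    rw [this]; exact mul_mem (inv_mem hm) hco)
  rw [h1, h2]


/-! ### Deodhar's lemma -/

open List in
lemma deodhar_lemma {cs : CoxeterSystem M W} {J : Set I} {a : W}
    (ha : a ∈ minRight cs J) (i : I) :
    (cs.simple i * a ∈ minRight cs J) ∨ ∃ j ∈ J, cs.simple i * a = a * cs.simple j := by
  rcases cs.length_simple_mul a i with hup | hdown
  · by_cases hm : cs.simple i * a ∈ minRight cs J
    · exact Or.inl hm
    · right
      simp only [minRight, Set.mem_setOf_eq, not_forall] at hm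
      obtain ⟨j, hj, hnot⟩ := hm
      refine ⟨j, hj, ?_⟩
      have hne := cs.length_mul_simple_ne (cs.simple i * a) j
      have hlt : cs.length (cs.simple i * a * cs.simple j) < cs.length (cs.simple i * a) := by
        omega
      have haj : cs.length (a * cs.simple j) = cs.length a + 1 := by
        have := ha j hj
        have := cs.length_mul_simple_ne a j
        rcases cs.length_mul_simple a j with c | c <;> omega
      -- s i is a left inversion of a * s j
      obtain ⟨ωa, hωared, hωaprod⟩ := cs.exists_reduced_word' a
      have hword : cs.wordProd (ωa ++ [j]) = a * cs.simple j := by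
        rw [cs.wordProd_append, cs.wordProd_singleton, hωaprod]
      have hwred : cs.IsReduced (ωa ++ [j]) := by
        show cs.length (cs.wordProd (ωa ++ [j])) = _
        rw [hword, List.length_append, List.length_singleton, haj]
        have : cs.length a = ωa.length := by rw [hωaprod]; exact hωared
        omega
      have hinv : cs.IsLeftInversion (cs.wordProd (ωa ++ [j])) (cs.simple i) := by
        refine ⟨cs.isReflection_simple i, ?_⟩
        rw [hword, haj]
        have h2 : cs.length (cs.simple i * (a * cs.simple j))
            = cs.length (cs.simple i * a * cs.simple j) := by rw [mul_assoc]
        omega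
      obtain ⟨k, hk, he⟩ := left_exchange cs hwred hinv
      rw [List.length_append, List.length_singleton] at hk
      rcases lt_or_ge k ωa.length with hzone | hzone
      · exfalso
        rw [List.eraseIdx_append_of_lt_length hzone, hword] at he
        have h3 : cs.simple i * a = cs.wordProd (ωa.eraseIdx k) := by
          have := congrArg (fun z => z * cs.simple j) he
          simp only [mul_assoc, cs.simple_mul_simple_self, mul_one] at this
          rw [this, cs.wordProd_append, cs.wordProd_singleton]
          simp [mul_assoc, cs.simple_mul_simple_self]
        have h4 : cs.length (cs.simple i * a) ≤ (ωa.eraseIdx k).length := by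
          rw [h3]; exact cs.length_wordProd_le _
        have h5 : (ωa.eraseIdx k).length + 1 = ωa.length :=
          List.length_eraseIdx_add_one hzone
        have h6 : cs.length a = ωa.length := by rw [hωaprod]; exact hωared
        omega
      · have hkeq : k = ωa.length := by omega
        have herase : (ωa ++ [j]).eraseIdx k = ωa := by
          rw [hkeq, List.eraseIdx_append_of_length_le (le_refl _), Nat.sub_self]
          simp
        rw [herase, hword, ← hωaprod] at he
        have := congrArg (fun z => z * cs.simple j) he
        simp only [mul_assoc, cs.simple_mul_simple_self, mul_one] at this
        rw [this]
  · -- s i * a is shorter : it is automatically in minRight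
    left
    intro j hj
    by_contra hcon
    have hne := cs.length_mul_simple_ne (cs.simple i * a) j
    have hlt : cs.length (cs.simple i * a * cs.simple j) < cs.length (cs.simple i * a) := by
      omega
    have h2 : a * cs.simple j = cs.simple i * (cs.simple i * a * cs.simple j) := by
      rw [← mul_assoc, ← mul_assoc, cs.simple_mul_simple_self, one_mul]
    have h3 : cs.length (a * cs.simple j) ≤ cs.length (cs.simple i * a * cs.simple j) + 1 := by
      rw [h2]
      have := cs.length_simple_mul (cs.simple i * a * cs.simple j) i
      omega
    have := ha j hj
    omega

/-! ### Sweeping a word across a minimal coset representative -/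

open List in
lemma conj_word_lemma (cs : CoxeterSystem M W) (J : Set I) (τ : List I) {a : W}
    (ha : a ∈ minRight cs J) :
    ∃ c ∈ minRight cs J, ∃ μ : List I, (∀ l ∈ μ, l ∈ J) ∧ μ.length ≤ τ.length ∧
      cs.wordProd τ * a = c * cs.wordProd μ ∧ (μ.length = τ.length → c = a) := by
  induction τ with
  | nil =>
    refine ⟨a, ha, [], by simp, by simp, ?_, fun _ => rfl⟩
    rw [cs.wordProd_nil, one_mul, mul_one]
  | cons i τ' ih =>
    obtain ⟨c, hc, μ, hμJ, hμlen, heq, hceq⟩ := ih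
    rcases deodhar_lemma hc i with hmin | ⟨j, hj, hsw⟩
    · refine ⟨cs.simple i * c, hmin, μ, hμJ, ?_, ?_, ?_⟩
      · simp only [List.length_cons]; omega
      · rw [cs.wordProd_cons, mul_assoc, heq, mul_assoc]
      · intro h
        exfalso
        simp only [List.length_cons] at h
        omega
    · refine ⟨c, hc, j :: μ, ?_, ?_, ?_, ?_⟩
      · intro l hl
        rcases List.mem_cons.mp hl with rfl | hl'
        exacts [hj, hμJ l hl']
      · simp only [List.length_cons]; omega
      · rw [cs.wordProd_cons, mul_assoc, heq, ← mul_assoc, hsw, cs.wordProd_cons, ← mul_assoc]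
      · intro h
        simp only [List.length_cons] at h
        exact hceq (by omega)

/-! ### Injectivity of `w ↦ W_J ⋅ w` on `Wᴶ` -/

open List in
lemma minRight_orbit_inj {cs : CoxeterSystem M W} {J : Set I} (δ : I ≃ I) (δW : W ≃* W)
    (hδW : ∀ i : I, δW (cs.simple i) = cs.simple (δ i)) {w w' : W}
    (hw : w ∈ minRight cs J) (hw' : w' ∈ minRight cs J) {x : W}
    (hx : x ∈ parabolic cs J) (h : w' = δW x * w * x⁻¹) : w = w' := by
  obtain ⟨ωx, hωxJ, hωxred, hωxprod⟩ := exists_reduced_word_of_mem_parabolic hx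
  have hδword : ∀ ω : List I, δW (cs.wordProd ω) = cs.wordProd (ω.map δ) := by
    intro ω
    induction ω with
    | nil => simp
    | cons i ω ihω => rw [cs.wordProd_cons, map_mul, hδW, ihω, List.map_cons, cs.wordProd_cons]
  obtain ⟨c, hc, μ, hμJ, hμlen, heq, hceq⟩ := conj_word_lemma cs J (ωx.map δ) hw
  have h2 : w' * x = c * cs.wordProd μ := by
    rw [← heq, ← hδword, hωxprod]
    rw [h]
    group
  have h3 : c⁻¹ * w' ∈ parabolic cs J := by
    have : c⁻¹ * w' = cs.wordProd μ * x⁻¹ := by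
      have := congrArg (fun z => c⁻¹ * (z * x⁻¹)) h2
      rw [show c⁻¹ * (w' * x * x⁻¹) = c⁻¹ * w' by group,
        show c⁻¹ * (c * cs.wordProd μ * x⁻¹) = cs.wordProd μ * x⁻¹ by group] at this
      exact this
    rw [this]
    exact mul_mem (wordProd_mem_parabolic hμJ) (inv_mem hx)
  have h4 : c = w' := minRight_unique hc hw' h3
  have h5 : x = cs.wordProd μ := by
    rw [h4] at h2
    exact mul_left_cancel h2
  have h6 : cs.length x ≤ μ.length := by rw [h5]; exact cs.length_wordProd_le μ
  have h7 : cs.length x = ωx.length := by rw [← hωxprod]; exact hωxred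
  have h9 : (ωx.map δ).length = ωx.length := List.length_map δ
  have h8 : μ.length = (ωx.map δ).length := by omega
  rw [← h4, hceq h8]


/-! ### Orbits -/

lemma self_mem_orbit (cs : CoxeterSystem M W) (J : Set I) (δW : W ≃* W) (w : W) :
    w ∈ orbit cs J δW w :=
  ⟨1, one_mem _, by simp⟩

lemma orbitMin_nonempty (cs : CoxeterSystem M W) (J : Set I) (δW : W ≃* W) (w : W) :
    ∃ v, v ∈ orbitMin cs J δW w := by
  have hne : {n | ∃ v ∈ orbit cs J δW w, cs.length v = n}.Nonempty :=
    ⟨cs.length w, w, self_mem_orbit cs J δW w, rfl⟩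
  obtain ⟨v, hv, hlen⟩ := Nat.sInf_mem hne
  exact ⟨v, hv, fun u hu => hlen ▸ Nat.sInf_le ⟨u, hu, rfl⟩⟩

end BruhatDevelopment

/-- `≤_{J,δ}` is a partial order on `W^J`. -/
theorem leJd_is_partial_order
    [Fintype I] [Finite W]
    (cs : CoxeterSystem M W) (J : Set I) (δ : I ≃ I)
    (hδM : ∀ i j : I, M (δ i) (δ j) = M i j)
    (δW : W ≃* W) (hδW : ∀ i : I, δW (cs.simple i) = cs.simple (δ i)) :
    (∀ w ∈ minRight cs J, leJd cs J δW w w) ∧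
    (∀ w w' w'' : W, w ∈ minRight cs J → w' ∈ minRight cs J → w'' ∈ minRight cs J →
      leJd cs J δW w w' → leJd cs J δW w' w'' → leJd cs J δW w w'') ∧
    (∀ w w' : W, w ∈ minRight cs J → w' ∈ minRight cs J →
      leJd cs J δW w w' → leJd cs J δW w' w → w = w') := by
  refine ⟨?_, ?_, ?_⟩
  · -- reflexivity
    intro w _ v' hv'
    exact ⟨v', hv', bruhatLE_refl cs v'⟩
  · -- transitivity
    intro w w' w'' _ _ _ h1 h2 v'' hv''
    obtain ⟨v', hv', hb2⟩ := h2 v'' hv''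
    obtain ⟨v, hv, hb1⟩ := h1 v' hv'
    exact ⟨v, hv, bruhatLE_trans hb1 hb2⟩
  · -- antisymmetry
    intro w w' hw hw' h1 h2
    obtain ⟨v', hv'⟩ := orbitMin_nonempty cs J δW w'
    obtain ⟨v, hv, hbv⟩ := h1 v' hv'
    obtain ⟨v'', hv'', hbv''⟩ := h2 v hv
    have l1 : cs.length v ≤ cs.length v' := bruhatLE_length hbv
    have l2 : cs.length v'' ≤ cs.length v := bruhatLE_length hbv''
    have l3 : cs.length v' ≤ cs.length v'' := hv'.2 v'' hv''.1
    have hveq : v = v' := bruhatLE_eq_of_length_ge hbv (by omega)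
    obtain ⟨x, hx, hvx⟩ := hv.1
    obtain ⟨x', hx', hvx'⟩ := hv'.1
    have hkey : w' = δW (x'⁻¹ * x) * w * (x'⁻¹ * x)⁻¹ := by
      have heq : δW x' * w' * x'⁻¹ = δW x * w * x⁻¹ := by rw [← hvx', ← hvx, hveq]
      have h6 := congrArg (fun z => (δW x')⁻¹ * z * x') heq
      rw [show (δW x')⁻¹ * (δW x' * w' * x'⁻¹) * x' = w' by group] at h6
      rw [map_mul, map_inv, h6]
      group
    exact minRight_orbit_inj δ δW hδW hw hw' (mul_mem (inv_mem hx') hx) hkey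


end HePaper
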